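/- Let (X, μ) be a measure space, let d ≥ 1 be a natural number, and let a > 0, γ > 1, 0 < ρ̲ ≤ ρ̄ be real numbers. Let ρ, r : X → ℝ be measurable with 0 ≤ ρ(x) and ρ̲ ≤ r(x) ≤ ρ̄ for μ-a.e. x, and let u, U : X → ℝ^d be measurable. Then for every δ ∈ (0,1) there is a constant C > 0, depending only on a, γ, ρ̲, ρ̄, δ (and not on ρ, r, u, U, μ), such that ∫_X |ρ − r| ‖u − U‖ dμ ≤ δ ∫_X ‖u − U‖² dμ + C ∫_X ( (1/2) ρ ‖u − U‖² + E_P(ρ|r) ) dμ, where E_P(ρ|r) = P(ρ) − P'(r)(ρ − r) − P(r), P(ρ) = a ρ^γ/(γ−1), and the integrals are Lebesgue integrals of nonnegative measurable functions (taking values in [0, ∞]). -/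

import Mathlib

/-!
Write `E_P(ρ|r) = a/(γ-1) · B(ρ, r)` with `B(x, y) = x^γ - y^γ - γ y^(γ-1) (x - y)` the Bregman
divergence of the convex function `x ↦ x^γ`. For `r ∈ [ρmin, ρmax]`, `B(ρ, r)` is bounded below by
a multiple of `r^γ` when `ρ ≤ (γ-1)/(2γ) ρmin`, by a multiple of `(ρ - r)²` while `ρ` stays in a
compact subinterval of `(0, ∞)` (where `x^γ` is strongly convex), and by a multiple of `ρ` once
`ρ^(γ-1) ≥ 2γ ρmax^(γ-1)`. With `s = |ρ - r|` and `t = ‖u - U‖`, Young's inequality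
`s t ≤ δ t² + s²/(4δ)` absorbs the first two regimes; in the third, `s ≤ ρ` and
`ρ t ≤ ρ t²/2 + ρ/2`. Integrating the pointwise bound, with the largest of the three constants,
gives the estimate.
-/

open MeasureTheory

/-- Pressure potential `P(ρ) = a ρ^γ / (γ - 1)` (real power). -/
noncomputable def Ppot (a γ ρ : ℝ) : ℝ := a * ρ ^ γ / (γ - 1)

/-- Derivative of the pressure potential, `P'(r) = a γ r^(γ-1) / (γ - 1)`. -/
noncomputable def dPpot (a γ r : ℝ) : ℝ := a * γ * r ^ (γ - 1) / (γ - 1)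

/-- Relative pressure potential `E_P(ρ|r) = P(ρ) - P'(r)(ρ - r) - P(r)`. -/
noncomputable def EP (a γ ρ r : ℝ) : ℝ :=
  Ppot a γ ρ - dPpot a γ r * (ρ - r) - Ppot a γ r

open Set

noncomputable def rpowBregman (γ x y : ℝ) : ℝ := x ^ γ - y ^ γ - γ * y ^ (γ - 1) * (x - y)

lemma EP_eq_div_mul_rpowBregman {a γ : ℝ} (hγ : γ ≠ 1) (x y : ℝ) :
    EP a γ x y = a / (γ - 1) * rpowBregman γ x y := by
  have : γ - 1 ≠ 0 := sub_ne_zero.mpr hγ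
  unfold EP Ppot dPpot rpowBregman
  field_simp
  ring

lemma Real.rpow_sub_one_mul_self {x γ : ℝ} (hx : 0 ≤ x) (hγ : γ ≠ 0) :
    x ^ (γ - 1) * x = x ^ γ := by
  conv_rhs => rw [← sub_add_cancel γ 1, Real.rpow_add' hx (by simpa), Real.rpow_one]

lemma ConvexOn.add_mul_sub_le_of_hasDerivAt {S : Set ℝ} {f : ℝ → ℝ} {f' x y : ℝ}
    (hf : ConvexOn ℝ S f) (hx : x ∈ S) (hy : y ∈ S) (hf' : HasDerivAt f f' y) :
    f y + f' * (x - y) ≤ f x := by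
  rcases lt_trichotomy x y with hxy | rfl | hxy
  · have := hf.slope_le_of_hasDerivAt hx hy hxy hf'
    rw [slope_def_field, div_le_iff₀ (sub_pos.2 hxy)] at this
    linarith
  · simp
  · have := hf.le_slope_of_hasDerivAt hy hx hxy hf'
    rw [slope_def_field, le_div_iff₀ (sub_pos.2 hxy)] at this
    linarith

lemma rpowBregman_nonneg {γ x y : ℝ} (hγ : 1 ≤ γ) (hx : 0 ≤ x) (hy : 0 ≤ y) :
    0 ≤ rpowBregman γ x y := by
  have := (convexOn_rpow hγ).add_mul_sub_le_of_hasDerivAt hx hy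
    (Real.hasDerivAt_rpow_const (Or.inr hγ))
  unfold rpowBregman
  linarith

lemma min_rpow_le_rpow_of_mem_Icc {m M z : ℝ} (hm : 0 < m) (hz : z ∈ Icc m M) (p : ℝ) :
    min (m ^ p) (M ^ p) ≤ z ^ p := by
  rcases le_total 0 p with hp | hp
  · exact (min_le_left _ _).trans (Real.rpow_le_rpow hm.le hz.1 hp)
  · exact (min_le_right _ _).trans (Real.rpow_le_rpow_of_nonpos (hm.trans_le hz.1) hz.2 hp)

lemma convexOn_rpow_sub_mul_sq {γ m M : ℝ} (hγ : 1 ≤ γ) (hm : 0 < m) :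
    ConvexOn ℝ (Icc m M) fun x ↦
      x ^ γ - γ * (γ - 1) * min (m ^ (γ - 2)) (M ^ (γ - 2)) / 2 * x ^ 2 := by
  set κ := γ * (γ - 1) * min (m ^ (γ - 2)) (M ^ (γ - 2))
  refine convexOn_of_hasDerivWithinAt2_nonneg (convex_Icc m M)
    (f' := fun x ↦ γ * x ^ (γ - 1) - κ * x)
    (f'' := fun x ↦ γ * ((γ - 1) * x ^ (γ - 1 - 1)) - κ) ?_ ?_ ?_ ?_
  · exact ((Real.continuous_rpow_const (by linarith)).sub
      (continuous_const.mul (continuous_pow 2))).continuousOn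
  · intro x hx
    rw [interior_Icc] at hx
    have h1 := (Real.hasDerivAt_rpow_const (p := γ) (Or.inl (hm.trans hx.1).ne'))
    have h2 := (hasDerivAt_pow 2 x).const_mul (κ / 2)
    exact ((h1.sub h2).congr_deriv (by norm_num; ring)).hasDerivWithinAt
  · intro x hx
    rw [interior_Icc] at hx
    have h1 := (Real.hasDerivAt_rpow_const (p := γ - 1) (Or.inl (hm.trans hx.1).ne')).const_mul γ
    exact ((h1.sub ((hasDerivAt_id x).const_mul κ)).congr_deriv (by ring)).hasDerivWithinAt
  · intro x hx
    rw [interior_Icc] at hx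
    have := mul_le_mul_of_nonneg_left
      (min_rpow_le_rpow_of_mem_Icc hm (Ioo_subset_Icc_self hx) (γ - 2))
      (by nlinarith : 0 ≤ γ * (γ - 1))
    rw [show γ - 1 - 1 = γ - 2 by ring]
    linarith

lemma mul_sq_le_rpowBregman {γ m M x y : ℝ} (hγ : 1 ≤ γ) (hm : 0 < m) (hx : x ∈ Icc m M)
    (hy : y ∈ Icc m M) :
    γ * (γ - 1) * min (m ^ (γ - 2)) (M ^ (γ - 2)) / 2 * (x - y) ^ 2 ≤ rpowBregman γ x y := by
  set κ := γ * (γ - 1) * min (m ^ (γ - 2)) (M ^ (γ - 2))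
  have hd := (Real.hasDerivAt_rpow_const (p := γ) (Or.inr hγ)).sub
    ((hasDerivAt_pow 2 y).const_mul (κ / 2))
  have := (convexOn_rpow_sub_mul_sq hγ hm).add_mul_sub_le_of_hasDerivAt hx hy hd
  unfold rpowBregman
  norm_num at this
  linear_combination this

lemma mul_rpow_le_rpowBregman {γ x y : ℝ} (hx : 0 ≤ x) (hy : 0 < y)
    (hxy : 2 * γ * x ≤ (γ - 1) * y) :
    (γ - 1) / 2 * y ^ γ ≤ rpowBregman γ x y := by
  have hyγ : y ^ (γ - 1) * y = y ^ γ := by rw [← Real.rpow_add_one hy.ne']; ring_nf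
  have hmul := mul_le_mul_of_nonneg_left hxy (Real.rpow_nonneg hy.le (γ - 1))
  have hxγ := Real.rpow_nonneg hx γ
  unfold rpowBregman
  linear_combination hxγ + hmul / 2 - (γ + 1) / 2 * hyγ

lemma mul_le_rpowBregman {γ M x y : ℝ} (hγ : 1 ≤ γ) (hx : 0 ≤ x) (hy : 0 ≤ y) (hyM : y ≤ M)
    (hxM : 2 * γ * M ^ (γ - 1) ≤ x ^ (γ - 1)) :
    γ * M ^ (γ - 1) * x ≤ rpowBregman γ x y := by
  have hγ0 : γ ≠ 0 := by positivity
  have hxγ := Real.rpow_sub_one_mul_self hx hγ0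
  have hyγ := Real.rpow_sub_one_mul_self hy hγ0
  have hxx := mul_le_mul_of_nonneg_right hxM hx
  have hyx : γ * (y ^ (γ - 1) * x) ≤ γ * (M ^ (γ - 1) * x) := by gcongr
  have hyy := mul_nonneg (by linarith : 0 ≤ γ - 1) (Real.rpow_nonneg hy γ)
  unfold rpowBregman
  linear_combination hxx + hyx + hyy + hxγ - γ * hyγ

lemma EP_nonneg {a γ x y : ℝ} (ha : 0 ≤ a) (hγ : 1 < γ) (hx : 0 ≤ x) (hy : 0 ≤ y) :
    0 ≤ EP a γ x y := by
  rw [EP_eq_div_mul_rpowBregman hγ.ne']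
  have : 0 ≤ γ - 1 := by linarith
  exact mul_nonneg (by positivity) (rpowBregman_nonneg hγ.le hx hy)

lemma mul_le_mul_sq_add_sq_div {δ : ℝ} (hδ : 0 < δ) (s t : ℝ) :
    s * t ≤ δ * t ^ 2 + s ^ 2 / (4 * δ) := by
  rw [← sub_nonneg]
  have : δ * t ^ 2 + s ^ 2 / (4 * δ) - s * t = (2 * δ * t - s) ^ 2 / (4 * δ) := by
    field_simp; ring
  rw [this]; positivity

section Absorption

variable {a γ δ : ℝ}

lemma exists_abs_sub_mul_le_of_le_mul {m M : ℝ} (ha : 0 < a) (hγ : 1 < γ) (hm : 0 < m)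
    (hmM : m ≤ M) (hδ : 0 < δ) :
    ∃ C > 0, ∀ ρ r t : ℝ, 0 ≤ ρ → ρ ≤ (γ - 1) / (2 * γ) * m → r ∈ Icc m M → 0 ≤ t →
      |ρ - r| * t ≤ δ * t ^ 2 + C * (1 / 2 * ρ * t ^ 2 + EP a γ ρ r) := by
  have hM : 0 < M := hm.trans_le hmM
  have hγ0 : 0 < γ := by linarith
  have hγ1 : 0 < γ - 1 := by linarith
  refine ⟨M ^ 2 / (2 * δ * a * m ^ γ), by positivity, fun ρ r t hρ hρm hr ht => ?_⟩
  have hr0 : 0 < r := hm.trans_le hr.1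
  have hρr : 2 * γ * ρ ≤ (γ - 1) * r := by
    calc 2 * γ * ρ ≤ 2 * γ * ((γ - 1) / (2 * γ) * m) := by gcongr
      _ = (γ - 1) * m := by field_simp
      _ ≤ (γ - 1) * r := by gcongr; exact hr.1
  have hEP : a / 2 * m ^ γ ≤ EP a γ ρ r := by
    rw [EP_eq_div_mul_rpowBregman hγ.ne']
    calc a / 2 * m ^ γ ≤ a / 2 * r ^ γ := by gcongr; exact hr.1
      _ = a / (γ - 1) * ((γ - 1) / 2 * r ^ γ) := by field_simp
      _ ≤ _ := by gcongr; exact mul_rpow_le_rpowBregman hρ hr0 hρr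
  have hs : |ρ - r| ≤ M := by
    have : ρ ≤ r := by nlinarith
    exact abs_sub_le_iff.2 ⟨by linarith [hr.2], by linarith [hr.2]⟩
  calc |ρ - r| * t ≤ δ * t ^ 2 + |ρ - r| ^ 2 / (4 * δ) := mul_le_mul_sq_add_sq_div hδ _ _
    _ ≤ δ * t ^ 2 + M ^ 2 / (4 * δ) := by gcongr
    _ = δ * t ^ 2 + M ^ 2 / (2 * δ * a * m ^ γ) * (a / 2 * m ^ γ) := by field_simp; ring
    _ ≤ _ := by gcongr; linarith [show 0 ≤ 1 / 2 * ρ * t ^ 2 by positivity]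

lemma exists_abs_sub_mul_le_of_mem_Icc {m M : ℝ} (ha : 0 < a) (hγ : 1 < γ) (hm : 0 < m)
    (hmM : m ≤ M) (hδ : 0 < δ) :
    ∃ C > 0, ∀ ρ r t : ℝ, ρ ∈ Icc m M → r ∈ Icc m M → 0 ≤ t →
      |ρ - r| * t ≤ δ * t ^ 2 + C * (1 / 2 * ρ * t ^ 2 + EP a γ ρ r) := by
  have hM : 0 < M := hm.trans_le hmM
  have hγ1 : 0 < γ - 1 := by linarith
  set c := a / (γ - 1) * (γ * (γ - 1) * min (m ^ (γ - 2)) (M ^ (γ - 2)) / 2)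
  have hc : 0 < c := by
    have := lt_min (Real.rpow_pos_of_pos hm (γ - 2)) (Real.rpow_pos_of_pos hM (γ - 2))
    positivity
  refine ⟨1 / (4 * δ * c), by positivity, fun ρ r t hρ hr ht => ?_⟩
  have hEP : c * (ρ - r) ^ 2 ≤ EP a γ ρ r := by
    rw [EP_eq_div_mul_rpowBregman hγ.ne', mul_assoc]
    gcongr
    exact mul_sq_le_rpowBregman hγ.le hm hρ hr
  have hρ0 : 0 ≤ ρ := hm.le.trans hρ.1
  calc |ρ - r| * t ≤ δ * t ^ 2 + |ρ - r| ^ 2 / (4 * δ) := mul_le_mul_sq_add_sq_div hδ _ _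
    _ = δ * t ^ 2 + 1 / (4 * δ * c) * (c * (ρ - r) ^ 2) := by rw [sq_abs]; field_simp
    _ ≤ _ := by gcongr; linarith [show 0 ≤ 1 / 2 * ρ * t ^ 2 by positivity]

lemma exists_abs_sub_mul_le_of_rpow_mul_le {M : ℝ} (ha : 0 < a) (hγ : 1 < γ) (hM : 0 < M)
    (hδ : 0 ≤ δ) :
    ∃ C > 0, ∀ ρ r t : ℝ, (2 * γ) ^ (γ - 1)⁻¹ * M ≤ ρ → r ∈ Icc 0 M → 0 ≤ t →
      |ρ - r| * t ≤ δ * t ^ 2 + C * (1 / 2 * ρ * t ^ 2 + EP a γ ρ r) := by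
  have hγ1 : 0 < γ - 1 := by linarith
  set c := a / (γ - 1) * (γ * M ^ (γ - 1))
  have hc : 0 < c := by have := Real.rpow_pos_of_pos hM (γ - 1); positivity
  refine ⟨max 1 (1 / (2 * c)), by positivity, fun ρ r t hρ hr ht => ?_⟩
  have hK : 1 ≤ (2 * γ) ^ (γ - 1)⁻¹ := Real.one_le_rpow (by linarith) (by positivity)
  have hMρ : M ≤ ρ := (le_mul_of_one_le_left hM.le hK).trans hρ
  have hρ0 : 0 ≤ ρ := hM.le.trans hMρ
  have hEP : c * ρ ≤ EP a γ ρ r := by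
    rw [EP_eq_div_mul_rpowBregman hγ.ne', mul_assoc]
    gcongr
    refine mul_le_rpowBregman hγ.le hρ0 hr.1 hr.2 ?_
    calc 2 * γ * M ^ (γ - 1) = ((2 * γ) ^ (γ - 1)⁻¹ * M) ^ (γ - 1) := by
          rw [Real.mul_rpow (by positivity) hM.le, ← Real.rpow_mul (by linarith),
            inv_mul_cancel₀ hγ1.ne', Real.rpow_one]
      _ ≤ ρ ^ (γ - 1) := by gcongr
  have hs : |ρ - r| ≤ ρ := abs_sub_le_iff.2 ⟨by linarith [hr.1], by linarith [hr.2]⟩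
  have hE : 0 ≤ 1 / 2 * ρ * t ^ 2 := by positivity
  calc |ρ - r| * t ≤ ρ * t := by gcongr
    _ ≤ 1 / 2 * ρ * t ^ 2 + 1 / (2 * c) * (c * ρ) := by
        field_simp
        nlinarith [mul_nonneg hρ0 (sq_nonneg (t - 1))]
    _ ≤ max 1 (1 / (2 * c)) * (1 / 2 * ρ * t ^ 2) + max 1 (1 / (2 * c)) * EP a γ ρ r :=
        add_le_add (le_mul_of_one_le_left hE (le_max_left _ _))
          (mul_le_mul (le_max_right _ _) hEP (by positivity) (by positivity))
    _ ≤ _ := by nlinarith [sq_nonneg t]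

lemma exists_abs_sub_mul_le {m M : ℝ} (ha : 0 < a) (hγ : 1 < γ) (hm : 0 < m) (hmM : m ≤ M)
    (hδ : 0 < δ) :
    ∃ C > 0, ∀ ρ r t : ℝ, 0 ≤ ρ → r ∈ Icc m M → 0 ≤ t →
      |ρ - r| * t ≤ δ * t ^ 2 + C * (1 / 2 * ρ * t ^ 2 + EP a γ ρ r) := by
  have hM : 0 < M := hm.trans_le hmM
  have hγ0 : 0 < γ := by linarith
  have hγ1 : 0 < γ - 1 := by linarith
  set m₀ := (γ - 1) / (2 * γ) * m
  set M₀ := (2 * γ) ^ (γ - 1)⁻¹ * M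
  have hm₀ : 0 < m₀ := by positivity
  have hm₀m : m₀ ≤ m := mul_le_of_le_one_left hm.le ((div_le_one (by positivity)).2 (by linarith))
  have hMM₀ : M ≤ M₀ := le_mul_of_one_le_left hM.le (Real.one_le_rpow (by linarith) (by positivity))
  obtain ⟨C₁, hC₁, h₁⟩ := exists_abs_sub_mul_le_of_le_mul ha hγ hm hmM hδ
  obtain ⟨C₂, hC₂, h₂⟩ :=
    exists_abs_sub_mul_le_of_mem_Icc ha hγ hm₀ (hm₀m.trans (hmM.trans hMM₀)) hδ
  obtain ⟨C₃, hC₃, h₃⟩ := exists_abs_sub_mul_le_of_rpow_mul_le ha hγ hM hδ.le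
  refine ⟨max C₁ (max C₂ C₃), by positivity, fun ρ r t hρ hr ht => ?_⟩
  obtain ⟨C, hC, h⟩ : ∃ C ≤ max C₁ (max C₂ C₃),
      |ρ - r| * t ≤ δ * t ^ 2 + C * (1 / 2 * ρ * t ^ 2 + EP a γ ρ r) := by
    rcases le_or_gt ρ m₀ with hsmall | hρm₀
    · exact ⟨C₁, le_max_left _ _, h₁ ρ r t hρ hsmall hr ht⟩
    rcases le_or_gt ρ M₀ with hmid | hlarge
    · exact ⟨C₂, (le_max_left _ _).trans (le_max_right _ _),
        h₂ ρ r t ⟨hρm₀.le, hmid⟩ ⟨hm₀m.trans hr.1, hr.2.trans hMM₀⟩ ht⟩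
    · exact ⟨C₃, (le_max_right _ _).trans (le_max_right _ _),
        h₃ ρ r t hlarge.le ⟨hm.le.trans hr.1, hr.2⟩ ht⟩
  have hE : 0 ≤ 1 / 2 * ρ * t ^ 2 + EP a γ ρ r :=
    add_nonneg (by positivity) (EP_nonneg ha.le hγ hρ (hm.le.trans hr.1))
  exact h.trans (by gcongr)

end Absorption

lemma lintegral_ofReal_le_mul_add_mul {X : Type*} [MeasurableSpace X] {μ : Measure X}
    {f g h : X → ℝ} {δ C : ℝ} (hg : AEMeasurable g μ) (hδ : 0 ≤ δ) (hC : 0 ≤ C)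
    (hf : ∀ᵐ x ∂μ, f x ≤ δ * g x + C * h x) :
    ∫⁻ x, ENNReal.ofReal (f x) ∂μ ≤
      ENNReal.ofReal δ * ∫⁻ x, ENNReal.ofReal (g x) ∂μ +
        ENNReal.ofReal C * ∫⁻ x, ENNReal.ofReal (h x) ∂μ := by
  calc ∫⁻ x, ENNReal.ofReal (f x) ∂μ
      ≤ ∫⁻ x, ENNReal.ofReal δ * ENNReal.ofReal (g x) +
          ENNReal.ofReal C * ENNReal.ofReal (h x) ∂μ := by
        refine lintegral_mono_ae ?_
        filter_upwards [hf] with x hfx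
        rw [← ENNReal.ofReal_mul hδ, ← ENNReal.ofReal_mul hC]
        exact (ENNReal.ofReal_le_ofReal hfx).trans ENNReal.ofReal_add_le
    _ = _ := by
        rw [lintegral_add_left' (hg.ennreal_ofReal.const_mul _),
          lintegral_const_mul' _ _ ENNReal.ofReal_ne_top,
          lintegral_const_mul' _ _ ENNReal.ofReal_ne_top]

theorem abs_mul_norm_le_relative_energy_general
    {X : Type*} [MeasurableSpace X] (d : ℕ)
    (a γ ρmin ρmax δ : ℝ) (ha : 0 < a) (hγ : 1 < γ)
    (h0 : 0 < ρmin) (hle : ρmin ≤ ρmax) (hδ : δ ∈ Set.Ioo (0 : ℝ) 1) :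
    ∃ C : ℝ, 0 < C ∧
      ∀ (μ : Measure X) (ρ r : X → ℝ) (u U : X → EuclideanSpace ℝ (Fin d)),
        Measurable ρ → Measurable r → Measurable u → Measurable U →
        (∀ᵐ x ∂μ, 0 ≤ ρ x) → (∀ᵐ x ∂μ, ρmin ≤ r x ∧ r x ≤ ρmax) →
        ∫⁻ x, ENNReal.ofReal (|ρ x - r x| * ‖u x - U x‖) ∂μ ≤
          ENNReal.ofReal δ * ∫⁻ x, ENNReal.ofReal (‖u x - U x‖ ^ 2) ∂μ +
          ENNReal.ofReal C *
            ∫⁻ x, ENNReal.ofReal ((1 / 2) * ρ x * ‖u x - U x‖ ^ 2 + EP a γ (ρ x) (r x)) ∂μ := by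
  obtain ⟨C, hC, hpointwise⟩ := exists_abs_sub_mul_le ha hγ h0 hle hδ.1
  refine ⟨C, hC, fun μ ρ r u U _ _ hu hU hρ hr => ?_⟩
  refine lintegral_ofReal_le_mul_add_mul ((hu.sub hU).norm.pow_const 2).aemeasurable
    hδ.1.le hC.le ?_
  filter_upwards [hρ, hr] with x hρx hrx
  exact hpointwise _ _ _ hρx hrx (norm_nonneg _)

/-- Absorption of the residual term `∫ |ρ - r| ‖u - U‖` by the relative energy:
for `d ≥ 1`, `a > 0`, `γ > 1`, `0 < ρmin ≤ ρmax` and any `δ ∈ (0,1)` there exists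
`C > 0`, depending only on `a, γ, ρmin, ρmax, δ` (and not on `μ, ρ, r, u, U`), such that
for all measurable `ρ, r : X → ℝ` and `u, U : X → ℝ^d` with `0 ≤ ρ` a.e. and
`ρmin ≤ r ≤ ρmax` a.e., one has
`∫ |ρ - r| ‖u - U‖ dμ ≤ δ ∫ ‖u - U‖² dμ + C ∫ ((1/2) ρ ‖u - U‖² + E_P(ρ|r)) dμ`,
the integrals being Lebesgue integrals with values in `[0,∞]`. -/
theorem abs_mul_norm_le_relative_energy
    {X : Type*} [MeasurableSpace X] (d : ℕ) (hd : 1 ≤ d)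
    (a γ ρmin ρmax δ : ℝ) (ha : 0 < a) (hγ : 1 < γ)
    (h0 : 0 < ρmin) (hle : ρmin ≤ ρmax) (hδ : δ ∈ Set.Ioo (0 : ℝ) 1) :
    ∃ C : ℝ, 0 < C ∧
      ∀ (μ : Measure X) (ρ r : X → ℝ) (u U : X → EuclideanSpace ℝ (Fin d)),
        Measurable ρ → Measurable r → Measurable u → Measurable U →
        (∀ᵐ x ∂μ, 0 ≤ ρ x) → (∀ᵐ x ∂μ, ρmin ≤ r x ∧ r x ≤ ρmax) →
        ∫⁻ x, ENNReal.ofReal (|ρ x - r x| * ‖u x - U x‖) ∂μ ≤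
          ENNReal.ofReal δ * ∫⁻ x, ENNReal.ofReal (‖u x - U x‖ ^ 2) ∂μ +
          ENNReal.ofReal C *
            ∫⁻ x, ENNReal.ofReal ((1 / 2) * ρ x * ‖u x - U x‖ ^ 2 + EP a γ (ρ x) (r x)) ∂μ :=
  abs_mul_norm_le_relative_energy_general d a γ ρmin ρmax δ ha hγ h0 hle hδ
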